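/- arXiv:2104.03905 — 6 statements merged into one kernel-verified Lean document; each statement's English description precedes it below -/
import Mathlib

section
/- Let p be a prime and k ≥ 2 an integer. The group homomorphism from PSL₂(ℤ/p^kℤ) to PSL₂(ℤ/p^(k−1)ℤ) induced by entrywise reduction of matrices modulo p^(k−1) is surjective, and its kernel has cardinality p³ if p^k ≠ 4 and cardinality 4 if p^k = 4. -/
/-- `SL₂(R)`: the group of 2×2 matrices over `R` of determinant 1. -/
abbrev SL2 (R : Type*) [CommRing R] := Matrix.SpecialLinearGroup (Fin 2) R

/-- The subgroup `{I, -I}` of `SL₂(R)`. -/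
def pmOne (R : Type*) [CommRing R] : Subgroup (SL2 R) := Subgroup.zpowers (-1 : SL2 R)

instance pmOne_normal (R : Type*) [CommRing R] : (pmOne R).Normal := by
  constructor
  intro x hx g
  obtain ⟨k, rfl⟩ := Subgroup.mem_zpowers_iff.mp hx
  have hc : Commute ((-1 : SL2 R) ^ k) g := (Commute.neg_one_left g).zpow_left k
  have : g * (-1 : SL2 R) ^ k * g⁻¹ = (-1 : SL2 R) ^ k := by
    rw [← hc.eq, mul_assoc, mul_inv_cancel, mul_one]
  rw [this]
  exact hx

/-- `PSL₂(R)`: the quotient of `SL₂(R)` by the subgroup `{I, -I}`. -/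
def PSL2 (R : Type*) [CommRing R] := SL2 R ⧸ pmOne R

noncomputable instance (R : Type*) [CommRing R] : Group (PSL2 R) :=
  inferInstanceAs (Group (SL2 R ⧸ pmOne R))

/-- Entrywise reduction `SL₂(ℤ/Mℤ) → SL₂(ℤ/Nℤ)` for `N ∣ M`. -/
def SL2reduce (M N : ℕ) (h : N ∣ M) : SL2 (ZMod M) →* SL2 (ZMod N) :=
  Matrix.SpecialLinearGroup.map (ZMod.castHom h (ZMod N))

lemma SL2reduce_neg_one (M N : ℕ) (h : N ∣ M) :
    SL2reduce M N h (-1) = -1 := by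
  apply Subtype.ext
  show (ZMod.castHom h (ZMod N)).mapMatrix ((-1 : SL2 (ZMod M)) : Matrix (Fin 2) (Fin 2) (ZMod M)) = _
  rw [Matrix.SpecialLinearGroup.coe_neg, Matrix.SpecialLinearGroup.coe_one, map_neg, map_one,
    Matrix.SpecialLinearGroup.coe_neg, Matrix.SpecialLinearGroup.coe_one]

/-- The induced homomorphism `PSL₂(ℤ/Mℤ) → PSL₂(ℤ/Nℤ)` for `N ∣ M`. -/
def PSL2reduce (M N : ℕ) (h : N ∣ M) : PSL2 (ZMod M) →* PSL2 (ZMod N) :=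
  QuotientGroup.map (pmOne (ZMod M)) (pmOne (ZMod N)) (SL2reduce M N h) (by
    intro x hx
    obtain ⟨k, rfl⟩ := Subgroup.mem_zpowers_iff.mp hx
    rw [Subgroup.mem_comap, map_zpow, SL2reduce_neg_one]
    exact Subgroup.zpow_mem _ (Subgroup.mem_zpowers _) k)

/-!
Let `I` be the kernel of `ℤ/p^k → ℤ/p^(k-1)`. Since `k ≤ 2(k-1)`, `I² = 0`, so every element
reducing to `1` is a unit. Hence a lift of a matrix of determinant `1` has unit determinant and can
be rescaled into `SL₂`, which gives surjectivity; and the kernel of the reduction on `SL₂` consists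
of the matrices `1 + X` with `X` over `I` of trace `0`, so it has `|I|³ = p³` elements. Passing to
`PSL₂` divides by `|{±1}|` upstairs and multiplies by `|{±1}|` downstairs. Both are `2`, except that
`{±1}` is trivial in `SL₂(ℤ/2)`: this is the exceptional case `p^k = 4`.
-/

theorem QuotientGroup.card_ker_map_mul_card {G H : Type*} [Group G] [Group H]
    {A : Subgroup G} [A.Normal] {B : Subgroup H} [B.Normal] [B.FiniteIndex]
    (φ : G →* H) (hφ : Function.Surjective φ) (hAB : A ≤ B.comap φ) :
    Nat.card (QuotientGroup.map A B φ hAB).ker * Nat.card A = Nat.card φ.ker * Nat.card B := by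
  have hψ : Function.Surjective (QuotientGroup.map A B φ hAB) :=
    QuotientGroup.map_surjective_of_surjective A B φ (QuotientGroup.mk_surjective.comp hφ) hAB
  have hkerψ := Subgroup.card_mul_index (QuotientGroup.map A B φ hAB).ker
  have hkerφ := Subgroup.card_mul_index φ.ker
  rw [Subgroup.index_ker, MonoidHom.range_eq_top.mpr hψ, Subgroup.card_top] at hkerψ
  rw [Subgroup.index_ker, MonoidHom.range_eq_top.mpr hφ, Subgroup.card_top] at hkerφ
  have hA := Subgroup.card_eq_card_quotient_mul_card_subgroup A
  have hB := Subgroup.card_eq_card_quotient_mul_card_subgroup B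
  have hBindex : Nat.card (H ⧸ B) ≠ 0 := Subgroup.FiniteIndex.index_ne_zero
  apply Nat.eq_of_mul_eq_mul_left (Nat.pos_of_ne_zero hBindex)
  calc Nat.card (H ⧸ B) * (Nat.card (QuotientGroup.map A B φ hAB).ker * Nat.card A)
      = Nat.card G := by rw [hA, ← hkerψ]; ring
    _ = Nat.card (H ⧸ B) * (Nat.card φ.ker * Nat.card B) := by rw [← hkerφ, hB]; ring

theorem orderOf_neg_one_SL2 (R : Type*) [CommRing R] :
    orderOf (-1 : SL2 R) = orderOf (-1 : R) := by
  rw [← orderOf_injective _ Matrix.SpecialLinearGroup.coeMonoidHom_injective,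
    ← orderOf_injective (Matrix.scalar (Fin 2) : R →+* _).toMonoidHom
      (fun _ _ h => Matrix.scalar_inj.mp h)]
  simp only [Matrix.SpecialLinearGroup.coeMonoidHom_apply, Matrix.SpecialLinearGroup.coe_neg,
    Matrix.SpecialLinearGroup.coe_one, RingHom.toMonoidHom_eq_coe, MonoidHom.coe_coe, map_neg,
    map_one]

theorem card_pmOne (R : Type*) [CommRing R] : Nat.card (pmOne R) = orderOf (-1 : R) := by
  rw [pmOne, Nat.card_zpowers, orderOf_neg_one_SL2]

section SquareZeroKernel

variable {R S : Type*} [CommRing R] [CommRing S] {f : R →+* S}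

theorem RingHom.mul_eq_zero_of_mem_ker (hf : RingHom.ker f ^ 2 = ⊥) {x y : R}
    (hx : x ∈ RingHom.ker f) (hy : y ∈ RingHom.ker f) : x * y = 0 := by
  have := Ideal.mul_mem_mul hx hy
  rwa [← sq, hf, Ideal.mem_bot] at this

theorem RingHom.isUnit_of_map_eq_one (hf : RingHom.ker f ^ 2 = ⊥) {d : R} (hd : f d = 1) :
    IsUnit d := by
  have hker : d - 1 ∈ RingHom.ker f := by simp [RingHom.mem_ker, hd]
  have hnil : IsNilpotent (d - 1) :=
    ⟨2, by rw [sq]; exact RingHom.mul_eq_zero_of_mem_ker hf hker hker⟩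
  simpa using hnil.isUnit_one_add

theorem Matrix.SpecialLinearGroup.map_surjective {n : Type*} [Fintype n] [DecidableEq n]
    [Nonempty n] (hf : Function.Surjective f) (hunit : ∀ d, f d = 1 → IsUnit d) :
    Function.Surjective (Matrix.SpecialLinearGroup.map f : SpecialLinearGroup n R →* _) := by
  intro B
  set A := (B : Matrix n n S).map (Function.surjInv hf)
  have hA : f.mapMatrix A = B := by ext; simp [A, Function.surjInv_eq hf]
  have hdet : f A.det = 1 := by rw [RingHom.map_det, hA, B.2]
  obtain ⟨u, hu⟩ := hunit _ hdet
  have hu_inv : f ↑u⁻¹ = 1 := by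
    calc f ↑u⁻¹ = f ↑u * f ↑u⁻¹ := by rw [hu, hdet, one_mul]
      _ = 1 := by rw [← map_mul, Units.mul_inv, map_one]
  let i : n := Classical.arbitrary n
  set C := Matrix.diagonal (Function.update 1 i (↑u⁻¹ : R))
  have hC : f.mapMatrix C = 1 := by
    rw [RingHom.mapMatrix_apply, Matrix.diagonal_map (map_zero f), ← Matrix.diagonal_one]
    congr 1
    ext j
    rcases eq_or_ne j i with rfl | hj
    · simp [hu_inv]
    · simp [hj]
  refine ⟨⟨A * C, ?_⟩, ?_⟩
  · rw [Matrix.det_mul, Matrix.det_diagonal, Finset.prod_update_of_mem (Finset.mem_univ i)]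
    simp [← hu]
  · apply Subtype.ext
    change f.mapMatrix (A * C) = B
    rw [map_mul, hA, hC, mul_one]

theorem Matrix.SpecialLinearGroup.mem_ker_map_iff {n : Type*} [Fintype n] [DecidableEq n]
    {A : SpecialLinearGroup n R} : A ∈ (map f).ker ↔ ∀ i j, f (A i j) = (1 : Matrix n n S) i j := by
  simp [Matrix.SpecialLinearGroup.ext_iff]

theorem Matrix.SpecialLinearGroup.card_ker_map_fin_two (hf : RingHom.ker f ^ 2 = ⊥) :
    Nat.card (map f : SpecialLinearGroup (Fin 2) R →* _).ker = Nat.card (RingHom.ker f) ^ 3 := by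
  have hsq : ∀ {x y}, x ∈ RingHom.ker f → y ∈ RingHom.ker f → x * y = 0 :=
    RingHom.mul_eq_zero_of_mem_ker hf
  let e : (map f : SpecialLinearGroup (Fin 2) R →* _).ker ≃
      RingHom.ker f × RingHom.ker f × RingHom.ker f :=
    { toFun A :=
        have hA := mem_ker_map_iff.mp A.2
        (⟨A.1 0 0 - 1, by simp [hA]⟩, ⟨A.1 0 1, by simp [hA]⟩, ⟨A.1 1 0, by simp [hA]⟩)
      invFun
        | (a, b, c) =>
          ⟨(⟨!![1 + a, b; c, 1 - a], by
              rw [Matrix.det_fin_two_of]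
              linear_combination -hsq a.2 a.2 - hsq b.2 c.2⟩ : SpecialLinearGroup (Fin 2) R), by
            have ha := (RingHom.mem_ker).mp a.2
            have hb := (RingHom.mem_ker).mp b.2
            have hc := (RingHom.mem_ker).mp c.2
            refine mem_ker_map_iff.mpr fun i j => ?_
            fin_cases i <;> fin_cases j <;> simp [ha, hb, hc]⟩
      left_inv A := by
        have hA := mem_ker_map_iff.mp A.2
        have h00 : A.1 0 0 - 1 ∈ RingHom.ker f := by simp [hA]
        have h11 : A.1 1 1 - 1 ∈ RingHom.ker f := by simp [hA]
        have h01 : A.1 0 1 ∈ RingHom.ker f := by simp [hA]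
        have h10 : A.1 1 0 ∈ RingHom.ker f := by simp [hA]
        have hdet : (A.1 : Matrix (Fin 2) (Fin 2) R).det = 1 := A.1.2
        rw [Matrix.det_fin_two] at hdet
        -- `det A = 1 + tr (A - 1)` up to products of elements of the kernel
        have htrace : 1 - (A.1 0 0 - 1) = A.1 1 1 := by
          linear_combination -hdet + hsq h00 h11 - hsq h01 h10
        apply Subtype.ext; apply Subtype.ext
        simp only
        rw [add_sub_cancel, htrace]
        exact (Matrix.eta_fin_two _).symm
      right_inv x := by simp }
  rw [Nat.card_congr e, Nat.card_prod, Nat.card_prod]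
  ring

end SquareZeroKernel

theorem ZMod.ker_castHom_sq_eq_bot {M N : ℕ} (h : N ∣ M) (h2 : M ∣ N ^ 2) :
    RingHom.ker (ZMod.castHom h (ZMod N)) ^ 2 = ⊥ := by
  have hN : ∀ x ∈ RingHom.ker (ZMod.castHom h (ZMod N)), ∃ a : ℤ, x = ((N * a : ℤ) : ZMod M) := by
    intro x hx
    obtain ⟨a, rfl⟩ := ZMod.intCast_surjective x
    rw [RingHom.mem_ker, map_intCast, ZMod.intCast_zmod_eq_zero_iff_dvd] at hx
    obtain ⟨b, rfl⟩ := hx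
    exact ⟨b, rfl⟩
  rw [sq, eq_bot_iff, Ideal.mul_le]
  intro x hx y hy
  obtain ⟨a, rfl⟩ := hN x hx
  obtain ⟨b, rfl⟩ := hN y hy
  rw [Ideal.mem_bot, ← Int.cast_mul, ZMod.intCast_zmod_eq_zero_iff_dvd]
  exact (Int.natCast_dvd_natCast.mpr h2).trans ⟨a * b, by push_cast; ring⟩

theorem ZMod.card_ker_castHom_mul {M N : ℕ} (h : N ∣ M) :
    Nat.card (RingHom.ker (ZMod.castHom h (ZMod N))) * N = M := by
  have := AddSubgroup.card_mul_index (ZMod.castHom h (ZMod N)).toAddMonoidHom.ker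
  rwa [AddSubgroup.index_ker, AddMonoidHom.range_eq_top.mpr (ZMod.castHom_surjective h),
    AddSubgroup.card_top, Nat.card_zmod, Nat.card_zmod] at this

theorem card_pmOne_zmod_prime_pow {p j : ℕ} (hp : p.Prime) (hj : j ≠ 0) :
    Nat.card (pmOne (ZMod (p ^ j))) = if p = 2 ∧ j = 1 then 1 else 2 := by
  have : Fact (1 < p ^ j) := ⟨Nat.one_lt_pow hj hp.one_lt⟩
  have hp2 : p ^ j = 2 ↔ p = 2 ∧ j = 1 :=
    ⟨hp.pow_inj' Nat.prime_two hj one_ne_zero, by rintro ⟨rfl, rfl⟩; rfl⟩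
  rw [card_pmOne, orderOf_neg_one, ZMod.ringChar_zmod_n]
  exact if_congr hp2 rfl rfl

section Reduction

variable {M N : ℕ} (h : N ∣ M)

theorem SL2reduce_surjective (h2 : M ∣ N ^ 2) : Function.Surjective (SL2reduce M N h) :=
  Matrix.SpecialLinearGroup.map_surjective (ZMod.castHom_surjective h)
    (fun _ => RingHom.isUnit_of_map_eq_one (ZMod.ker_castHom_sq_eq_bot h h2))

theorem PSL2reduce_surjective (h2 : M ∣ N ^ 2) : Function.Surjective (PSL2reduce M N h) :=
  QuotientGroup.map_surjective_of_surjective _ _ _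
    (QuotientGroup.mk_surjective.comp (SL2reduce_surjective h h2)) _

theorem card_ker_SL2reduce [NeZero N] (h2 : M ∣ N ^ 2) {q : ℕ} (hq : M = N * q) :
    Nat.card (SL2reduce M N h).ker = q ^ 3 := by
  have hcard := (ZMod.card_ker_castHom_mul h).trans hq
  rw [mul_comm, Nat.mul_left_cancel_iff (Nat.pos_of_ne_zero (NeZero.ne N))] at hcard
  rw [SL2reduce, Matrix.SpecialLinearGroup.card_ker_map_fin_two (ZMod.ker_castHom_sq_eq_bot h h2),
    hcard]

theorem card_ker_PSL2reduce_mul [NeZero N] (h2 : M ∣ N ^ 2) :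
    Nat.card (PSL2reduce M N h).ker * Nat.card (pmOne (ZMod M))
      = Nat.card (SL2reduce M N h).ker * Nat.card (pmOne (ZMod N)) :=
  QuotientGroup.card_ker_map_mul_card _ (SL2reduce_surjective h h2) _

end Reduction

/-- For a prime `p` and `k ≥ 2`, the homomorphism
`PSL₂(ℤ/p^kℤ) → PSL₂(ℤ/p^(k-1)ℤ)` induced by entrywise reduction modulo `p^(k-1)`
is surjective, and its kernel has cardinality `p³`, unless `p^k = 4`, in which
case it has cardinality `4`. -/
theorem stmt0 (p k : ℕ) (hp : p.Prime) (hk : 2 ≤ k) :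
    Function.Surjective (PSL2reduce (p ^ k) (p ^ (k - 1)) (pow_dvd_pow p (Nat.sub_le k 1))) ∧
    Nat.card (MonoidHom.ker (PSL2reduce (p ^ k) (p ^ (k - 1)) (pow_dvd_pow p (Nat.sub_le k 1))))
      = if p ^ k = 4 then 4 else p ^ 3 := by
  have hdvd := pow_dvd_pow p (Nat.sub_le k 1)
  have hdvd_sq : p ^ k ∣ (p ^ (k - 1)) ^ 2 := by rw [← pow_mul]; exact pow_dvd_pow p (by omega)
  have hsucc : p ^ k = p ^ (k - 1) * p := by rw [← pow_succ, Nat.sub_add_cancel (by omega)]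
  have : NeZero (p ^ (k - 1)) := ⟨pow_ne_zero _ hp.ne_zero⟩
  refine ⟨PSL2reduce_surjective hdvd hdvd_sq, ?_⟩
  have hcount := card_ker_PSL2reduce_mul hdvd hdvd_sq
  rw [card_ker_SL2reduce hdvd hdvd_sq hsucc, card_pmOne_zmod_prime_pow hp (by omega),
    card_pmOne_zmod_prime_pow hp (by omega), if_neg (by omega)] at hcount
  by_cases hpk : p = 2 ∧ k = 2
  · obtain ⟨rfl, rfl⟩ := hpk
    norm_num at hcount ⊢
    omega
  · have h4 : p ^ k ≠ 4 := fun h4 => hpk (hp.pow_inj' Nat.prime_two (by omega) two_ne_zero h4)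
    rw [if_neg (by omega), mul_comm] at hcount
    rw [if_neg h4]
    omega
end

section
/- Let l and m be coprime integers with l ≥ 3 and m ≥ 3 such that neither l nor m is twice an odd integer, and let π : SL₂(ℤ) → SL₂(ℤ)/{±I} be the quotient homomorphism. Then the image under π of Γ(lm) is a subgroup of index 2 in the intersection of the image under π of Γ(l) with the image under π of Γ(m). -/
/-- The principal congruence subgroup `Γ(N)` of `SL₂(ℤ)`: the kernel of the
entrywise reduction map `SL₂(ℤ) → SL₂(ℤ/Nℤ)`. -/
def Gamma (N : ℕ) : Subgroup (SL2 ℤ) :=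
  (Matrix.SpecialLinearGroup.map (Int.castRingHom (ZMod N))).ker

lemma mem_pmOne_iff {R : Type*} [CommRing R] {x : SL2 R} : x ∈ pmOne R ↔ x = 1 ∨ x = -1 := by
  refine ⟨fun hx ↦ ?_, ?_⟩
  · obtain ⟨k, rfl⟩ := Subgroup.mem_zpowers_iff.mp hx
    rcases Int.even_or_odd k with hk | hk
    · exact .inl hk.neg_one_zpow
    · exact .inr hk.neg_one_zpow
  · rintro (rfl | rfl)
    exacts [one_mem _, Subgroup.mem_zpowers _]

lemma mk'_mem_map_mk'_iff {R : Type*} [CommRing R] {S : Subgroup (SL2 R)} {A : SL2 R} :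
    QuotientGroup.mk' (pmOne R) A ∈ S.map (QuotientGroup.mk' (pmOne R)) ↔ A ∈ S ∨ -A ∈ S := by
  simp only [Subgroup.mem_map, QuotientGroup.mk'_apply, QuotientGroup.eq, mem_pmOne_iff,
    inv_mul_eq_iff_eq_mul, mul_one, mul_neg_one]
  constructor
  · rintro ⟨B, hB, rfl | rfl⟩
    exacts [.inl hB, .inr (by rwa [neg_neg])]
  · rintro (hA | hA)
    exacts [⟨A, hA, .inl rfl⟩, ⟨-A, hA, .inr (neg_neg A).symm⟩]

lemma mem_Gamma_iff_modEq {N : ℕ} {A : SL2 ℤ} :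
    A ∈ Gamma N ↔ ∀ i j, A i j ≡ (1 : Matrix (Fin 2) (Fin 2) ℤ) i j [ZMOD N] := by
  simp only [Gamma, MonoidHom.mem_ker, Matrix.SpecialLinearGroup.ext_iff,
    ← ZMod.intCast_eq_intCast_iff]
  simp [Matrix.one_apply]

lemma Gamma_mul_eq_inf {l m : ℕ} (hco : l.Coprime m) : Gamma (l * m) = Gamma l ⊓ Gamma m := by
  ext A
  have hco' : (l : ℤ).natAbs.Coprime (m : ℤ).natAbs := hco
  simp only [Subgroup.mem_inf, mem_Gamma_iff_modEq, Nat.cast_mul,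
    ← Int.modEq_and_modEq_iff_modEq_mul hco', ← forall_and]

lemma neg_one_mem_Gamma_iff {N : ℕ} : -1 ∈ Gamma N ↔ N ∣ 2 := by
  simpa [mem_Gamma_iff_modEq, Fin.forall_fin_two, Int.modEq_iff_dvd] using
    Int.natCast_dvd_natCast (m := N) (n := 2)

lemma neg_notMem_Gamma_of_mem {N : ℕ} (hN : ¬ N ∣ 2) {A : SL2 ℤ} (hA : A ∈ Gamma N) :
    -A ∉ Gamma N := fun hnegA ↦
  hN (neg_one_mem_Gamma_iff.mp (by simpa using mul_mem hnegA (inv_mem hA)))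

lemma exists_mem_Gamma_neg_mem_Gamma {l m : ℕ} (hco : l.Coprime m) :
    ∃ M : SL2 ℤ, M ∈ Gamma l ∧ -M ∈ Gamma m := by
  obtain ⟨u, v, huv⟩ : IsCoprime ((l : ℤ) ^ 2) ((m : ℤ) ^ 2) :=
    (Nat.isCoprime_iff_coprime.mpr hco).pow
  -- `a = v m² - u l²` is `≡ 1 [ZMOD l²]` and `≡ -1 [ZMOD m²]`, so `a² - 1 = -4uv l²m²` factors as
  -- a product of two multiples of `lm`, the off-diagonal entries.
  obtain ⟨M, hM⟩ : ∃ M : SL2 ℤ, (M : Matrix (Fin 2) (Fin 2) ℤ) =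
      !![v * m ^ 2 - u * l ^ 2, -2 * u * l * m; 2 * v * l * m, v * m ^ 2 - u * l ^ 2] := by
    refine ⟨⟨_, ?_⟩, rfl⟩
    rw [Matrix.det_fin_two_of]
    linear_combination (u * l ^ 2 + v * m ^ 2 + 1) * huv
  have hl : (l : ℤ) ∣ 1 - (v * m ^ 2 - u * l ^ 2) := ⟨2 * u * l, by linear_combination -huv⟩
  have hm : (m : ℤ) ∣ 1 + (v * m ^ 2 - u * l ^ 2) := ⟨2 * v * m, by linear_combination -huv⟩
  refine ⟨M, ?_, ?_⟩ <;>
    simp only [mem_Gamma_iff_modEq, Fin.forall_fin_two, Int.modEq_iff_dvd, hM,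
      Matrix.SpecialLinearGroup.coe_neg, Matrix.neg_apply, Matrix.of_apply, Matrix.cons_val',
      Matrix.cons_val_zero, Matrix.cons_val_one, Matrix.cons_val_fin_one, Matrix.one_apply_eq,
      Matrix.one_apply_ne zero_ne_one, Matrix.one_apply_ne one_ne_zero, zero_sub, dvd_neg,
      sub_neg_eq_add]
  · exact ⟨⟨hl, -2 * u * m, by ring⟩, ⟨2 * v * m, by ring⟩, hl⟩
  · exact ⟨⟨hm, -2 * u * l, by ring⟩, ⟨2 * v * l, by ring⟩, hm⟩

theorem stmt2_general (l m : ℕ) (hl : 3 ≤ l) (hm : 3 ≤ m) (hco : Nat.Coprime l m) :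
    (Gamma (l * m)).map (QuotientGroup.mk' (pmOne ℤ)) ≤
      (Gamma l).map (QuotientGroup.mk' (pmOne ℤ)) ⊓
        (Gamma m).map (QuotientGroup.mk' (pmOne ℤ)) ∧
    ((Gamma (l * m)).map (QuotientGroup.mk' (pmOne ℤ))).relIndex
      ((Gamma l).map (QuotientGroup.mk' (pmOne ℤ)) ⊓
        (Gamma m).map (QuotientGroup.mk' (pmOne ℤ))) = 2 := by
  set π := QuotientGroup.mk' (pmOne ℤ)
  have not_dvd_two {n : ℕ} (hn : 3 ≤ n) : ¬ n ∣ 2 := fun h ↦ by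
    have := Nat.le_of_dvd two_pos h
    omega
  rw [Gamma_mul_eq_inf hco]
  refine ⟨le_inf (Subgroup.map_mono inf_le_left) (Subgroup.map_mono inf_le_right), ?_⟩
  obtain ⟨M, hMl, hMm⟩ := exists_mem_Gamma_neg_mem_Gamma hco
  refine Subgroup.relIndex_eq_two_iff_exists_notMem_and.mpr ⟨π M, ?_, ?_, ?_⟩
  · exact ⟨Subgroup.mem_map_of_mem π hMl, mk'_mem_map_mk'_iff.mpr (.inr hMm)⟩
  · rw [mk'_mem_map_mk'_iff]
    rintro (⟨-, hM⟩ | ⟨hM, -⟩)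
    · exact neg_notMem_Gamma_of_mem (not_dvd_two hm) hM hMm
    · exact neg_notMem_Gamma_of_mem (not_dvd_two hl) hMl hM
  · rintro _ ⟨⟨B, hBl, rfl⟩, hBm⟩
    rcases mk'_mem_map_mk'_iff.mp hBm with hBm | hBm
    · exact .inr (Subgroup.mem_map_of_mem π ⟨hBl, hBm⟩)
    · refine .inl (Subgroup.mem_map_of_mem π ⟨mul_mem hBl hMl, ?_⟩)
      simpa using mul_mem hBm hMm

/-- For coprime `l, m ≥ 3` neither of which is twice an odd integer,
with `π : SL₂(ℤ) → SL₂(ℤ)/{±I}` the quotient homomorphism, the image of `Γ(lm)` under `π`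
is a subgroup of index 2 in the intersection of the images of `Γ(l)` and `Γ(m)` under `π`. -/
theorem stmt2 (l m : ℕ) (hl : 3 ≤ l) (hm : 3 ≤ m) (hco : Nat.Coprime l m)
    (hl2 : ¬∃ j : ℕ, Odd j ∧ l = 2 * j) (hm2 : ¬∃ j : ℕ, Odd j ∧ m = 2 * j) :
    (Gamma (l * m)).map (QuotientGroup.mk' (pmOne ℤ)) ≤
      (Gamma l).map (QuotientGroup.mk' (pmOne ℤ)) ⊓
        (Gamma m).map (QuotientGroup.mk' (pmOne ℤ)) ∧
    ((Gamma (l * m)).map (QuotientGroup.mk' (pmOne ℤ))).relIndex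
      ((Gamma l).map (QuotientGroup.mk' (pmOne ℤ)) ⊓
        (Gamma m).map (QuotientGroup.mk' (pmOne ℤ))) = 2 :=
  stmt2_general l m hl hm hco
end

section
/- Let G1 and G2 be finite simple graphs that are regular of degrees n and m respectively, with n = d·m for a positive integer d. Suppose π is a surjective map from the vertices of G1 onto the vertices of G2 such that adjacent vertices of G1 have adjacent images, and such that for every vertex w of G1 and every vertex v′ of G2 adjacent to π(w), exactly d neighbours of w are mapped by π to v′. Then for every real number λ, the dimension of the kernel of A2 − λI is at most the dimension of the kernel of A1 − dλI, where A1 and A2 are the (real) adjacency matrices of G1 and G2; in particular, if λ is an eigenvalue of A2, then dλ is an eigenvalue of A1 with geometric multiplicity at least the geometric multiplicity of λ for A2. -/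
/-- Let `G1`, `G2` be finite simple graphs, regular of degrees `n = d·m`
and `m` respectively, and let `π` be a surjective map on vertices carrying adjacent
vertices to adjacent vertices such that, for every vertex `w` of `G1` and every neighbour
`v'` of `π w` in `G2`, exactly `d` neighbours of `w` map to `v'`.  Then for every `λ : ℝ`,
`dim ker (A₂ - λ·I) ≤ dim ker (A₁ - d·λ·I)`, where `A₁`, `A₂` are the real adjacency
matrices; i.e. eigenvalues lift with geometric multiplicity at least preserved. -/
theorem stmt3 {V₁ V₂ : Type*} [Fintype V₁] [Fintype V₂] [DecidableEq V₁] [DecidableEq V₂]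
    (G₁ : SimpleGraph V₁) (G₂ : SimpleGraph V₂)
    [DecidableRel G₁.Adj] [DecidableRel G₂.Adj]
    (n m d : ℕ) (hd : 0 < d) (hnm : n = d * m)
    (hreg₁ : G₁.IsRegularOfDegree n) (hreg₂ : G₂.IsRegularOfDegree m)
    (π : V₁ → V₂) (hsurj : Function.Surjective π)
    (hadj : ∀ ⦃u v : V₁⦄, G₁.Adj u v → G₂.Adj (π u) (π v))
    (hfib : ∀ (w : V₁) (v' : V₂), G₂.Adj (π w) v' →
      ((G₁.neighborFinset w).filter (fun u => π u = v')).card = d) :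
    ∀ lam : ℝ,
      Module.finrank ℝ (LinearMap.ker ((G₂.adjMatrix ℝ - lam • (1 : Matrix V₂ V₂ ℝ)).mulVecLin)) ≤
      Module.finrank ℝ
        (LinearMap.ker ((G₁.adjMatrix ℝ - ((d : ℝ) * lam) • (1 : Matrix V₁ V₁ ℝ)).mulVecLin)) := by
  intro lam
  set M₁ := G₁.adjMatrix ℝ - ((d : ℝ) * lam) • (1 : Matrix V₁ V₁ ℝ) with hM₁
  set M₂ := G₂.adjMatrix ℝ - lam • (1 : Matrix V₂ V₂ ℝ) with hM₂
  have hmap : ∀ f ∈ LinearMap.ker M₂.mulVecLin,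
      LinearMap.funLeft ℝ ℝ π f ∈ LinearMap.ker M₁.mulVecLin := by
    intro f hf
    rw [LinearMap.mem_ker, Matrix.mulVecLin_apply] at hf ⊢
    have hf' : ∀ v, (G₂.adjMatrix ℝ).mulVec f v = lam * f v := by
      intro v
      have := congrFun hf v
      simpa [hM₂, Matrix.sub_mulVec, Matrix.smul_mulVec, Matrix.one_mulVec,
        sub_eq_zero, Pi.smul_apply, smul_eq_mul] using this
    funext w
    have key : ∑ u ∈ G₁.neighborFinset w, f (π u)
        = (d : ℝ) * ∑ v' ∈ G₂.neighborFinset (π w), f v' := by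
      rw [← Finset.sum_fiberwise_of_maps_to (g := π)
        (fun u hu => by
          rw [SimpleGraph.mem_neighborFinset] at hu ⊢
          exact hadj hu)]
      rw [Finset.mul_sum]
      refine Finset.sum_congr rfl fun v' hv' => ?_
      have hcard := hfib w v' (by simpa using hv')
      calc ∑ u ∈ (G₁.neighborFinset w).filter (fun u => π u = v'), f (π u)
          = ∑ u ∈ (G₁.neighborFinset w).filter (fun u => π u = v'), f v' := by
            refine Finset.sum_congr rfl fun u hu => ?_
            rw [(Finset.mem_filter.mp hu).2]
        _ = (d : ℝ) * f v' := by rw [Finset.sum_const, hcard, nsmul_eq_mul]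
    have h1 : (G₁.adjMatrix ℝ).mulVec (LinearMap.funLeft ℝ ℝ π f) w
        = ((d : ℝ) * lam) * f (π w) := by
      rw [SimpleGraph.adjMatrix_mulVec_apply]
      have h2 : (G₂.adjMatrix ℝ).mulVec f (π w)
          = ∑ v' ∈ G₂.neighborFinset (π w), f v' :=
        SimpleGraph.adjMatrix_mulVec_apply _ _ _
      have := hf' (π w)
      rw [h2] at this
      calc ∑ u ∈ G₁.neighborFinset w, (LinearMap.funLeft ℝ ℝ π f) u
          = ∑ u ∈ G₁.neighborFinset w, f (π u) := rfl
        _ = (d : ℝ) * ∑ v' ∈ G₂.neighborFinset (π w), f v' := key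
        _ = (d : ℝ) * (lam * f (π w)) := by rw [this]
        _ = ((d : ℝ) * lam) * f (π w) := (mul_assoc _ _ _).symm
    rw [hM₁, Matrix.sub_mulVec, Matrix.smul_mulVec, Matrix.one_mulVec]
    simp only [Pi.sub_apply, Pi.smul_apply, smul_eq_mul, Pi.zero_apply, h1]
    show ((d : ℝ) * lam) * f (π w) - ((d : ℝ) * lam) * f (π w) = 0
    ring
  have hinj : Function.Injective (LinearMap.funLeft ℝ ℝ π) :=
    LinearMap.funLeft_injective_of_surjective ℝ ℝ π hsurj
  exact LinearMap.finrank_le_finrank_of_injective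
    (f := (LinearMap.funLeft ℝ ℝ π).restrict hmap)
    (fun x y h => Subtype.ext (hinj (congrArg Subtype.val h)))
end

section
/- Let N = k·r for positive integers k and r, let A be a real symmetric N×N matrix whose rows and columns are indexed by pairs (i,s) with i ∈ {1,…,k} and s ∈ {1,…,r}, let C be a real symmetric r×r matrix, and let n ≥ 0 be a real number. Suppose that for all indices, the ((i,s),(j,t)) entry of A² − nI equals the (s,t) entry of C (i.e., A² − nI consists of k×k blocks all equal to C). Then dim ker(A − √n·I) + dim ker(A + √n·I) ≥ N − rank(C). -/
open Module

/-- Nullity of a composition is at most the sum of nullities. -/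
lemma finrank_ker_comp_le {V : Type*} [AddCommGroup V] [Module ℝ V]
    [FiniteDimensional ℝ V] (f g : V →ₗ[ℝ] V) :
    finrank ℝ (LinearMap.ker (f ∘ₗ g)) ≤
      finrank ℝ (LinearMap.ker f) + finrank ℝ (LinearMap.ker g) := by
  set K := LinearMap.ker (f ∘ₗ g)
  have hmem : ∀ x : K, g (x : V) ∈ LinearMap.ker f := fun x => by
    have hx : (f ∘ₗ g) (x : V) = 0 := LinearMap.mem_ker.mp x.2
    rw [LinearMap.comp_apply] at hx
    exact LinearMap.mem_ker.mpr hx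
  let h : K →ₗ[ℝ] LinearMap.ker f :=
    LinearMap.codRestrict (LinearMap.ker f) (g ∘ₗ K.subtype) (fun x => hmem x)
  have h1 : finrank ℝ (LinearMap.range h) + finrank ℝ (LinearMap.ker h) = finrank ℝ K :=
    LinearMap.finrank_range_add_finrank_ker h
  have h2 : finrank ℝ (LinearMap.range h) ≤ finrank ℝ (LinearMap.ker f) :=
    Submodule.finrank_le _
  -- inject ker h into ker g
  let j : LinearMap.ker h →ₗ[ℝ] LinearMap.ker g :=
    LinearMap.codRestrict (LinearMap.ker g) (K.subtype ∘ₗ (LinearMap.ker h).subtype)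
      (fun x => by
        have hx := x.2
        have h0 : h (x : K) = 0 := LinearMap.mem_ker.mp hx
        have : g ((x : K) : V) = 0 := by
          have h1 := Subtype.ext_iff.mp h0
          simp only [h, LinearMap.codRestrict_apply, LinearMap.comp_apply,
            Submodule.subtype_apply, ZeroMemClass.coe_zero] at h1
          exact h1
        simpa [LinearMap.mem_ker] using this)
  have hj : Function.Injective j := by
    intro a b hab
    have : ((a : K) : V) = ((b : K) : V) := by
      have := Subtype.ext_iff.mp hab
      simpa [j] using this
    exact Subtype.ext (Subtype.ext this)
  have h3 : finrank ℝ (LinearMap.ker h) ≤ finrank ℝ (LinearMap.ker g) :=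
    LinearMap.finrank_le_finrank_of_injective hj
  omega

/-- Let `A` be a real symmetric `N×N` matrix (`N = k·r`), indexed by
pairs `(i,s)` with `i ∈ Fin k`, `s ∈ Fin r`, let `C` be a real symmetric `r×r` matrix and
`n ≥ 0` a real number, and suppose `A² - n·I` consists of `k × k` blocks all equal to `C`.
Then `dim ker (A - √n·I) + dim ker (A + √n·I) ≥ N - rank C`. -/
theorem stmt4 (k r : ℕ) (hk : 0 < k) (hr : 0 < r)
    (A : Matrix (Fin k × Fin r) (Fin k × Fin r) ℝ) (hA : A.IsSymm)
    (C : Matrix (Fin r) (Fin r) ℝ) (hC : C.IsSymm)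
    (n : ℝ) (hn : 0 ≤ n)
    (hblock : ∀ (i j : Fin k) (s t : Fin r),
      (A * A - n • (1 : Matrix (Fin k × Fin r) (Fin k × Fin r) ℝ)) (i, s) (j, t) = C s t) :
    k * r - C.rank ≤
      Module.finrank ℝ (LinearMap.ker
          ((A - Real.sqrt n • (1 : Matrix (Fin k × Fin r) (Fin k × Fin r) ℝ)).mulVecLin)) +
        Module.finrank ℝ (LinearMap.ker
          ((A + Real.sqrt n • (1 : Matrix (Fin k × Fin r) (Fin k × Fin r) ℝ)).mulVecLin)) := by
  classical
  set B : Matrix (Fin k × Fin r) (Fin k × Fin r) ℝ := A * A - n • 1 with hB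
  -- B factors through C
  let E : Matrix (Fin k × Fin r) (Fin r) ℝ := Matrix.of fun p t => if p.2 = t then 1 else 0
  let F : Matrix (Fin r) (Fin k × Fin r) ℝ := Matrix.of fun t p => if t = p.2 then 1 else 0
  have hfac : B = E * C * F := by
    ext ⟨i, s⟩ ⟨j, t⟩
    have : (E * C * F) (i, s) (j, t) = C s t := by
      simp [Matrix.mul_apply, E, F, Finset.sum_ite_eq, Finset.sum_ite_eq']
    rw [this]; exact hblock i j s t
  have hrankB : B.rank ≤ C.rank := by
    rw [hfac]
    calc (E * C * F).rank ≤ (E * C).rank := Matrix.rank_mul_le_left _ _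
      _ ≤ C.rank := Matrix.rank_mul_le_right _ _
  -- B = (A - √n 1)(A + √n 1)
  have hsplit : B = (A - Real.sqrt n • 1) * (A + Real.sqrt n • 1) := by
    have hs : Real.sqrt n * Real.sqrt n = n := Real.mul_self_sqrt hn
    have hexp : (A - Real.sqrt n • 1) * (A + Real.sqrt n • 1)
        = A * A + Real.sqrt n • A - Real.sqrt n • A
          - (Real.sqrt n * Real.sqrt n) • (1 : Matrix (Fin k × Fin r) (Fin k × Fin r) ℝ) := by
      simp only [Matrix.sub_mul, Matrix.mul_add, Matrix.smul_mul, Matrix.mul_smul,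
        Matrix.one_mul, Matrix.mul_one, smul_smul]
      module
    rw [hB, hexp, hs]
    abel
  have hcomp : B.mulVecLin =
      (A - Real.sqrt n • 1).mulVecLin ∘ₗ (A + Real.sqrt n • 1).mulVecLin := by
    rw [hsplit, Matrix.mulVecLin_mul]
  have hker : finrank ℝ (LinearMap.ker B.mulVecLin) ≤
      finrank ℝ (LinearMap.ker (A - Real.sqrt n • 1).mulVecLin) +
      finrank ℝ (LinearMap.ker (A + Real.sqrt n • 1).mulVecLin) := by
    rw [hcomp]; exact finrank_ker_comp_le _ _
  have hrn : B.rank + finrank ℝ (LinearMap.ker B.mulVecLin) = k * r := by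
    have := LinearMap.finrank_range_add_finrank_ker B.mulVecLin
    simpa [Matrix.rank, Module.finrank_fintype_fun_eq_card] using this
  omega
end

section
/- Let p be an odd prime. There exists a surjective map φ from the vertex set of the Farey graph G3(p) onto the set {0, 1, …, p} such that every fiber φ⁻¹(j) has exactly (p−1)/2 elements, and for every vertex v of G3(p), the restriction of φ to the set of neighbours of v is a bijection onto {0, 1, …, p} \ {φ(v)}. (In other words, G3(p) is a (p−1)/2-fold graph covering of the complete graph K_{p+1} on p+1 vertices.) -/
/-- The equivalence relation identifying `(a,c)` with `(-a,-c)` on the set of pairs of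
elements of `ℤ/nℤ` generating the unit ideal. -/
def FareySetoid (n : ℕ) : Setoid {p : ZMod n × ZMod n // IsCoprime p.1 p.2} where
  r p q := p.1 = q.1 ∨ p.1 = -q.1
  iseqv := by
    constructor
    · intro p; exact Or.inl rfl
    · rintro p q (h | h)
      · exact Or.inl h.symm
      · right; rw [h, neg_neg]
    · rintro p q s (h1 | h1) (h2 | h2)
      · exact Or.inl (h1.trans h2)
      · right; rw [h1, h2]
      · right; rw [h1, h2]
      · left; rw [h1, h2, neg_neg]

/-- The vertices of the Farey graph `G3(n)`: classes `[a:c]` of pairs `(a,c) ∈ (ℤ/nℤ)²`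
generating the unit ideal, with `(a,c) ~ (-a,-c)`. -/
def FareyVertex (n : ℕ) := Quotient (FareySetoid n)

/-- The vertex `[a:c]` of the Farey graph. -/
def FareyVertex.mk (n : ℕ) (a c : ZMod n) (h : IsCoprime a c) : FareyVertex n :=
  Quotient.mk (FareySetoid n) ⟨(a, c), h⟩

/-- The Farey graph `G3(n)`: vertices `[a:c]` and `[b:d]` are adjacent iff
`ad - bc ≡ ±1 (mod n)`. -/
def FareyGraph (n : ℕ) : SimpleGraph (FareyVertex n) where
  Adj u v := u ≠ v ∧ ∃ a c b d : ZMod n,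
    (∃ h, u = FareyVertex.mk n a c h) ∧ (∃ h, v = FareyVertex.mk n b d h) ∧
    (a * d - b * c = 1 ∨ a * d - b * c = -1)
  symm := by
    constructor
    rintro u v ⟨hne, a, c, b, d, hu, hv, h⟩
    refine ⟨hne.symm, b, d, a, c, hv, hu, ?_⟩
    rcases h with h | h
    · right; linear_combination -h
    · left; linear_combination -h
  loopless := ⟨fun u h => h.1 rfl⟩

instance (n : ℕ) [NeZero n] : Finite (FareyVertex n) := Quotient.finite _

/-- A pair of integers `b, d` with `gcd(b, d, n) = 1` yields a pair generating the unit
ideal of `ℤ/nℤ`. -/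
lemma isCoprime_zmod_of_gcd {n : ℕ} {b d : ℤ} (h : Int.gcd b (Int.gcd d n) = 1) :
    IsCoprime (b : ZMod n) (d : ZMod n) := by
  obtain ⟨u, v, huv⟩ := Int.isCoprime_iff_gcd_eq_one.mpr h
  have hgcd : ((Int.gcd d n : ℕ) : ℤ) = d * Int.gcdA d n + n * Int.gcdB d n :=
    Int.gcd_eq_gcd_ab d (n : ℤ)
  refine ⟨(u : ZMod n), ((v * Int.gcdA d (n : ℤ) : ℤ) : ZMod n), ?_⟩
  have huv' : u * b + (v * Int.gcdA d (n : ℤ)) * d + (v * Int.gcdB d (n : ℤ)) * n = 1 := by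
    rw [← huv, hgcd]; ring
  have := congrArg (fun z : ℤ => (z : ZMod n)) huv'
  push_cast at this
  rw [ZMod.natCast_self] at this
  push_cast
  linear_combination this
/-- The vertex `[b:d]` of `G3(n)` determined by integers `b`, `d` with `gcd(b,d,n) = 1`. -/
def FareyVertex.ofInt (n : ℕ) (b d : ℤ) (h : Int.gcd b (Int.gcd d n) = 1) : FareyVertex n :=
  FareyVertex.mk n (b : ZMod n) (d : ZMod n) (isCoprime_zmod_of_gcd h)

/-- The number of vertices of the Farey graph `G3(n)`. -/
noncomputable def fareyCard (n : ℕ) : ℕ := Nat.card (FareyVertex n)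

/-- The characteristic polynomial of the (real) adjacency matrix of the Farey
graph `G3(n)` (junk value `1` for `n = 0`). -/
noncomputable def fareyCharpoly (n : ℕ) : Polynomial ℝ :=
  if h : n = 0 then 1
  else
    letI : NeZero n := ⟨h⟩
    letI : Fintype (FareyVertex n) := Fintype.ofFinite _
    letI : DecidableEq (FareyVertex n) := Classical.decEq _
    letI : DecidableRel (FareyGraph n).Adj := Classical.decRel _
    Matrix.charpoly ((FareyGraph n).adjMatrix ℝ)

/-- The spectrum of the Farey graph `G3(n)`: the multiset of real roots, with
multiplicity, of the characteristic polynomial of its adjacency matrix. -/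
noncomputable def sp3 (n : ℕ) : Multiset ℝ := (fareyCharpoly n).roots

/-!
The vertex `[a:c]` spans the line `𝔽ₚ·(a,c)` of `𝔽ₚ²`, and `φ` is this line, read in the
projective line `ℙ¹(𝔽ₚ)`, which has `p + 1` points. The vertices over the line `𝔽ₚ·w` are the
classes `[t w]` with `t ≠ 0`, up to the sign of `t`: there are `(p - 1)/2` of them. For a vertex
`v = [x]` and a line `ℓ ≠ 𝔽ₚ·x`, the map `det(x, ·)` is a linear isomorphism `ℓ ≃ 𝔽ₚ`, so `ℓ`
contains exactly the two vectors `±y` with `det(x, y) = ±1`; they form a single vertex, the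
unique neighbour of `v` over `ℓ`.
-/

open scoped LinearAlgebra.Projectivization

section PairDet

variable {R : Type*} [CommRing R]

def pairDet (x y : R × R) : R := x.1 * y.2 - y.1 * x.2

@[simp] lemma pairDet_self (x : R × R) : pairDet x x = 0 := by
  simp only [pairDet]; ring

@[simp] lemma pairDet_neg_left (x y : R × R) : pairDet (-x) y = -pairDet x y := by
  simp only [pairDet, Prod.fst_neg, Prod.snd_neg]; ring

@[simp] lemma pairDet_neg_right (x y : R × R) : pairDet x (-y) = -pairDet x y := by
  simp only [pairDet, Prod.fst_neg, Prod.snd_neg]; ring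

@[simp] lemma pairDet_smul_right (x y : R × R) (s : R) :
    pairDet x (s • y) = s * pairDet x y := by
  simp only [pairDet, Prod.smul_fst, Prod.smul_snd, smul_eq_mul]; ring

lemma exists_eq_smul_of_pairDet_eq_zero {x y : R × R} (hx : IsCoprime x.1 x.2)
    (h : pairDet x y = 0) : ∃ s : R, y = s • x := by
  obtain ⟨u, v, huv⟩ := hx
  rw [pairDet] at h
  refine ⟨u * y.1 + v * y.2, Prod.ext ?_ ?_⟩
  · simp only [Prod.smul_fst, smul_eq_mul]
    linear_combination (-y.1) * huv - v * h
  · simp only [Prod.smul_snd, smul_eq_mul]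
    linear_combination (-y.2) * huv + u * h

end PairDet

section SignUnits

variable {R : Type*} [Ring R]

lemma neg_eq_one_or_neg_one_iff {a : R} : (-a = 1 ∨ -a = -1) ↔ (a = 1 ∨ a = -1) := by
  rw [neg_eq_iff_eq_neg, neg_inj, or_comm]

lemma eq_one_or_neg_one_of_mul {a b : R} (ha : a = 1 ∨ a = -1)
    (hab : b * a = 1 ∨ b * a = -1) : b = 1 ∨ b = -1 := by
  rcases ha with rfl | rfl
  · rwa [mul_one] at hab
  · rwa [mul_neg_one, neg_eq_one_or_neg_one_iff] at hab

end SignUnits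

lemma isCoprime_fst_snd_iff_ne_zero {K : Type*} [Field K] {x : K × K} :
    IsCoprime x.1 x.2 ↔ x ≠ 0 := by
  refine ⟨fun h hx => not_isCoprime_zero_zero (by rwa [hx] at h), fun hx => ?_⟩
  by_cases h1 : x.1 = 0
  · have h2 : x.2 ≠ 0 := fun h2 => hx (Prod.ext h1 h2)
    exact ⟨0, x.2⁻¹, by simp [h2]⟩
  · exact ⟨x.1⁻¹, 0, by simp [h1]⟩

lemma ZMod.natAbs_valMinAbs_natCast_of_le_half {n a : ℕ} (h : a ≤ n / 2) :
    (a : ZMod n).valMinAbs.natAbs = a := by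
  rw [ZMod.valMinAbs_natCast_of_le_half h, Int.natAbs_natCast]

lemma ZMod.natCast_eq_or_eq_neg_iff_of_le_half {n a b : ℕ} (ha : a ≤ n / 2) (hb : b ≤ n / 2) :
    ((a : ZMod n) = b ∨ (a : ZMod n) = -b) ↔ a = b := by
  rw [← ZMod.natAbs_valMinAbs_eq_natAbs_valMinAbs, natAbs_valMinAbs_natCast_of_le_half ha,
    natAbs_valMinAbs_natCast_of_le_half hb]

lemma Projectivization.card_zmod_prod (p : ℕ) [Fact p.Prime] :
    Nat.card (ℙ (ZMod p) (ZMod p × ZMod p)) = p + 1 := by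
  rw [card_of_finrank_two _ _ (by simp), Nat.card_zmod]

namespace FareyVertex

section

variable {n : ℕ}

lemma mk_eq_mk_iff {x y : ZMod n × ZMod n} (hx : IsCoprime x.1 x.2) (hy : IsCoprime y.1 y.2) :
    mk n x.1 x.2 hx = mk n y.1 y.2 hy ↔ y = x ∨ y = -x :=
  Quotient.eq.trans (or_congr eq_comm (eq_comm.trans neg_eq_iff_eq_neg))

lemma adj_mk_iff [Nontrivial (ZMod n)] {x y : ZMod n × ZMod n} (hx : IsCoprime x.1 x.2)
    (hy : IsCoprime y.1 y.2) :
    (FareyGraph n).Adj (mk n x.1 x.2 hx) (mk n y.1 y.2 hy) ↔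
      pairDet x y = 1 ∨ pairDet x y = -1 := by
  constructor
  · rintro ⟨-, a, c, b, d, ⟨ha, hu⟩, ⟨hb, hv⟩, hdet⟩
    change pairDet (a, c) (b, d) = 1 ∨ pairDet (a, c) (b, d) = -1 at hdet
    rw [show mk n a c ha = mk n (a, c).1 (a, c).2 ha from rfl, mk_eq_mk_iff] at hu
    rw [show mk n b d hb = mk n (b, d).1 (b, d).2 hb from rfl, mk_eq_mk_iff] at hv
    rcases hu with hu | hu <;> rcases hv with hv | hv <;> rw [hu, hv] at hdet <;>
      simpa only [pairDet_neg_left, pairDet_neg_right, neg_neg, neg_eq_one_or_neg_one_iff]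
        using hdet
  · intro hdet
    refine ⟨fun heq => ?_, x.1, x.2, y.1, y.2, ⟨hx, rfl⟩, ⟨hy, rfl⟩, hdet⟩
    have h0 : pairDet x y = 0 := by
      rcases (mk_eq_mk_iff hx hy).mp heq with rfl | rfl <;> simp
    rcases hdet with h | h <;> rw [h] at h0
    exacts [one_ne_zero h0, neg_ne_zero.mpr one_ne_zero h0]

end

variable {p : ℕ} [Fact p.Prime]

def ofNeZero (x : ZMod p × ZMod p) (hx : x ≠ 0) : FareyVertex p :=
  mk p x.1 x.2 (isCoprime_fst_snd_iff_ne_zero.mpr hx)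

lemma exists_eq_ofNeZero (v : FareyVertex p) : ∃ x hx, v = ofNeZero x hx :=
  Quotient.ind (motive := fun v => ∃ x hx, v = ofNeZero x hx)
    (fun x => ⟨x.1, isCoprime_fst_snd_iff_ne_zero.mp x.2, rfl⟩) v

lemma ofNeZero_eq_ofNeZero_iff {x y : ZMod p × ZMod p} (hx : x ≠ 0) (hy : y ≠ 0) :
    ofNeZero x hx = ofNeZero y hy ↔ y = x ∨ y = -x :=
  mk_eq_mk_iff _ _

lemma ofNeZero_smul_eq_ofNeZero_smul_iff {y : ZMod p × ZMod p} {s t : ZMod p}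
    (hs : s • y ≠ 0) (ht : t • y ≠ 0) :
    ofNeZero (s • y) hs = ofNeZero (t • y) ht ↔ t = s ∨ t = -s := by
  have hy : y ≠ 0 := right_ne_zero_of_smul hs
  rw [ofNeZero_eq_ofNeZero_iff, ← neg_smul, (smul_left_injective _ hy).eq_iff,
    (smul_left_injective _ hy).eq_iff]

lemma adj_ofNeZero_iff {x y : ZMod p × ZMod p} (hx : x ≠ 0) (hy : y ≠ 0) :
    (FareyGraph p).Adj (ofNeZero x hx) (ofNeZero y hy) ↔ pairDet x y = 1 ∨ pairDet x y = -1 :=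
  adj_mk_iff _ _

def line : FareyVertex p → ℙ (ZMod p) (ZMod p × ZMod p) :=
  Quotient.lift
    (fun x => Projectivization.mk (ZMod p) x.1 (isCoprime_fst_snd_iff_ne_zero.mp x.2)) <| by
    rintro ⟨x, hx⟩ ⟨y, hy⟩ (h | h)
    · exact (Projectivization.mk_eq_mk_iff' _ _ _ _ _).mpr ⟨1, (one_smul _ _).trans h.symm⟩
    · exact (Projectivization.mk_eq_mk_iff' _ _ _ _ _).mpr ⟨-1, (neg_one_smul _ _).trans h.symm⟩

lemma line_ofNeZero (x : ZMod p × ZMod p) (hx : x ≠ 0) :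
    line (ofNeZero x hx) = Projectivization.mk (ZMod p) x hx :=
  rfl

lemma line_surjective : Function.Surjective (line (p := p)) :=
  Projectivization.ind fun x hx => ⟨ofNeZero x hx, rfl⟩

lemma line_ofNeZero_eq_iff {x y : ZMod p × ZMod p} (hx : x ≠ 0) (hy : y ≠ 0) :
    line (ofNeZero x hx) = line (ofNeZero y hy) ↔ pairDet x y = 0 := by
  rw [line_ofNeZero, line_ofNeZero, eq_comm, Projectivization.mk_eq_mk_iff']
  refine ⟨fun ⟨a, hy⟩ => by simp [← hy], fun h => ?_⟩
  obtain ⟨s, rfl⟩ := exists_eq_smul_of_pairDet_eq_zero (isCoprime_fst_snd_iff_ne_zero.mpr hx) h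
  exact ⟨s, rfl⟩

lemma line_ofNeZero_smul {y : ZMod p × ZMod p} {t : ZMod p} (ht : t • y ≠ 0) (hy : y ≠ 0) :
    line (ofNeZero (t • y) ht) = line (ofNeZero y hy) :=
  (Projectivization.mk_eq_mk_iff' _ _ _ _ _).mpr ⟨t, rfl⟩

lemma bijOn_line_neighborSet (v : FareyVertex p) :
    Set.BijOn line ((FareyGraph p).neighborSet v) {line v}ᶜ := by
  obtain ⟨x, hx, rfl⟩ := exists_eq_ofNeZero v
  refine ⟨?mapsTo, ?injOn, ?surjOn⟩
  case mapsTo =>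
    intro w hw hline
    obtain ⟨y, hy, rfl⟩ := exists_eq_ofNeZero w
    have hdet := (adj_ofNeZero_iff hx hy).mp hw
    rw [(line_ofNeZero_eq_iff hx hy).mp (Set.mem_singleton_iff.mp hline).symm] at hdet
    simp at hdet
  case injOn =>
    intro u hu w hw hline
    obtain ⟨y, hy, rfl⟩ := exists_eq_ofNeZero u
    obtain ⟨z, hz, rfl⟩ := exists_eq_ofNeZero w
    obtain ⟨s, rfl⟩ := exists_eq_smul_of_pairDet_eq_zero (isCoprime_fst_snd_iff_ne_zero.mpr hy)
      ((line_ofNeZero_eq_iff hy hz).mp hline)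
    have hs : s = 1 ∨ s = -1 := eq_one_or_neg_one_of_mul ((adj_ofNeZero_iff hx hy).mp hu)
      (by simpa using (adj_ofNeZero_iff hx hz).mp hw)
    rw [ofNeZero_eq_ofNeZero_iff]
    rcases hs with rfl | rfl <;> simp
  case surjOn =>
    intro ℓ hℓ
    obtain ⟨w, rfl⟩ := line_surjective ℓ
    obtain ⟨y, hy, rfl⟩ := exists_eq_ofNeZero w
    have hδ : pairDet x y ≠ 0 := fun h => hℓ ((line_ofNeZero_eq_iff hx hy).mpr h).symm
    have hu : (pairDet x y)⁻¹ • y ≠ 0 := smul_ne_zero (inv_ne_zero hδ) hy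
    refine ⟨ofNeZero _ hu, (adj_ofNeZero_iff hx hu).mpr (Or.inl ?_), line_ofNeZero_smul hu hy⟩
    rw [pairDet_smul_right, inv_mul_cancel₀ hδ]

lemma card_line_preimage (hodd : Odd p) (ℓ : ℙ (ZMod p) (ZMod p × ZMod p)) :
    Nat.card (line ⁻¹' {ℓ}) = (p - 1) / 2 := by
  obtain ⟨w, rfl⟩ := line_surjective ℓ
  obtain ⟨y, hy, rfl⟩ := exists_eq_ofNeZero w
  have hcast : ∀ n ∈ Set.Icc 1 (p / 2), (n : ZMod p) • y ≠ 0 := by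
    rintro n ⟨h1, h2⟩
    refine smul_ne_zero (fun h => ?_) hy
    have := ZMod.natAbs_valMinAbs_natCast_of_le_half h2
    rw [h, ZMod.valMinAbs_zero] at this
    omega
  -- every `t ≠ 0` is `±n` for exactly one `n ∈ [1, p/2]`, namely `n = |t.valMinAbs|`
  let f : Set.Icc 1 (p / 2) → line ⁻¹' {line (ofNeZero y hy)} := fun n =>
    ⟨ofNeZero _ (hcast n n.2), line_ofNeZero_smul _ hy⟩
  have hf : Function.Bijective f := by
    refine ⟨fun n m hnm => ?_, fun ⟨v, hv⟩ => ?_⟩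
    · have := (ofNeZero_smul_eq_ofNeZero_smul_iff (hcast n n.2) (hcast m m.2)).mp
        (congrArg Subtype.val hnm)
      exact Subtype.ext ((ZMod.natCast_eq_or_eq_neg_iff_of_le_half m.2.2 n.2.2).mp this).symm
    · obtain ⟨z, hz, rfl⟩ := exists_eq_ofNeZero v
      obtain ⟨t, rfl⟩ := exists_eq_smul_of_pairDet_eq_zero
        (isCoprime_fst_snd_iff_ne_zero.mpr hy) ((line_ofNeZero_eq_iff hy hz).mp hv.symm)
      have hn : t.valMinAbs.natAbs ∈ Set.Icc 1 (p / 2) :=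
        ⟨by simpa [Nat.one_le_iff_ne_zero] using left_ne_zero_of_smul hz,
          ZMod.natAbs_valMinAbs_le t⟩
      refine ⟨⟨_, hn⟩, Subtype.ext ((ofNeZero_smul_eq_ofNeZero_smul_iff (hcast _ hn) hz).mpr
        (ZMod.natAbs_valMinAbs_eq_natAbs_valMinAbs.mp
          (ZMod.natAbs_valMinAbs_natCast_of_le_half hn.2).symm))⟩
  obtain ⟨k, rfl⟩ := hodd
  rw [← Nat.card_eq_of_bijective f hf, Nat.card_eq_fintype_card]
  simp only [Fintype.card_ofFinset, Nat.card_Icc]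
  omega

end FareyVertex

/-- For an odd prime `p`, the Farey graph `G3(p)` is a `(p-1)/2`-fold
graph covering of the complete graph `K_{p+1}`: there is a surjection `φ` from the
vertices of `G3(p)` onto `{0, 1, …, p}` all of whose fibers have `(p-1)/2` elements,
such that for every vertex `v`, `φ` restricts to a bijection from the neighbours of `v`
onto the complement of `{φ v}`. -/
theorem stmt5 (p : ℕ) (hp : p.Prime) (hodd : Odd p) :
    ∃ φ : FareyVertex p → Fin (p + 1),
      Function.Surjective φ ∧
      (∀ j : Fin (p + 1), Nat.card (φ ⁻¹' {j}) = (p - 1) / 2) ∧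
      (∀ v : FareyVertex p, Set.BijOn φ ((FareyGraph p).neighborSet v) {φ v}ᶜ) := by
  have : Fact p.Prime := ⟨hp⟩
  let e : ℙ (ZMod p) (ZMod p × ZMod p) ≃ Fin (p + 1) :=
    (Finite.equivFin _).trans (finCongr (Projectivization.card_zmod_prod p))
  refine ⟨e ∘ FareyVertex.line, e.surjective.comp FareyVertex.line_surjective, fun j => ?_,
    fun v => ?_⟩
  · rw [Set.preimage_comp, ← e.symm_symm, ← Equiv.image_eq_preimage_symm, Set.image_singleton]
    exact FareyVertex.card_line_preimage hodd _
  · exact ((Set.bijOn_singleton.mpr rfl).compl e.bijective).comp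
      (FareyVertex.bijOn_line_neighborSet v)
end

section
/- Let n ≥ 3 be an integer and let b, d be integers with gcd(b,d,n) = 1, so that [b:d] is a vertex of the Farey graph G3(n); set r = gcd(d,n). Then the number of walks of length 2 in G3(n) between the vertex [1:0] and the vertex [b:d] equals: 2 if r = 1; 4 if r = 2 and b is odd; 0 if r ≥ 2 and r divides neither b−1 nor b+1; and r if r > 2 and r divides one of b−1, b+1. -/
/-!
The neighbours of `[1:0]` are the vertices `[x:1]`, `x ∈ ℤ/nℤ`, pairwise distinct because
`1 ≠ -1` in `ℤ/nℤ` for `n ≥ 3`. Such a vertex is adjacent to `[b:d]` exactly when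
`x d ≡ b + 1` or `x d ≡ b - 1 (mod n)`, two disjoint conditions since `2 ≢ 0`. The congruence
`x d ≡ c (mod n)` is solvable iff `r = gcd(d, n)` divides `c`, and its solutions then form a coset
of the kernel of multiplication by `d` on the cyclic group `ℤ/nℤ`, which has `gcd(n, |d|) = r`
elements. Hence the count is `r·[r ∣ b + 1] + r·[r ∣ b - 1]`, which gives all four cases.
-/

namespace ZMod

theorem exists_mul_intCast_eq_intCast_iff (n : ℕ) (d c : ℤ) :
    (∃ x : ZMod n, x * d = c) ↔ (Int.gcd d n : ℤ) ∣ c := by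
  constructor
  · rintro ⟨x, hx⟩
    obtain ⟨k, rfl⟩ := ZMod.intCast_surjective x
    rw [← Int.cast_mul, ZMod.intCast_eq_intCast_iff] at hx
    simpa using dvd_add ((Int.gcd_dvd_right d n).trans hx.dvd)
      ((Int.gcd_dvd_left d n).mul_left k)
  · rintro ⟨e, rfl⟩
    refine ⟨(e * d.gcdA n : ℤ), ?_⟩
    rw [← Int.cast_mul, ZMod.intCast_eq_intCast_iff, Int.gcd_eq_gcd_ab, Int.modEq_iff_dvd]
    exact ⟨d.gcdB n * e, by ring⟩

theorem card_mul_intCast_eq_zero (n : ℕ) [NeZero n] (d : ℤ) :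
    Nat.card {x : ZMod n // x * d = 0} = Int.gcd d n := by
  have hker (x : ZMod n) :
      x * d = 0 ↔ x ∈ (nsmulAddMonoidHom d.natAbs : ZMod n →+ ZMod n).ker := by
    obtain ⟨k, rfl | rfl⟩ := Int.eq_nat_or_neg d <;> simp [mul_comm]
  rw [Nat.card_congr (Equiv.subtypeEquivRight hker), IsAddCyclic.card_nsmulAddMonoidHom_ker,
    Nat.card_zmod, Int.gcd, Nat.gcd_comm, Int.natAbs_natCast]

theorem card_mul_intCast_eq_intCast (n : ℕ) [NeZero n] (d c : ℤ) :
    Nat.card {x : ZMod n // x * d = c} = if (Int.gcd d n : ℤ) ∣ c then Int.gcd d n else 0 := by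
  split_ifs with hc
  · obtain ⟨x₀, hx₀⟩ := (exists_mul_intCast_eq_intCast_iff n d c).2 hc
    rw [← hx₀, ← card_mul_intCast_eq_zero n d]
    exact Nat.card_congr ((AddMonoidHom.mulRight (d : ZMod n)).fiberEquivKer x₀)
  · refine Nat.card_eq_zero.2 (.inl ⟨fun ⟨x, hx⟩ => ?_⟩)
    exact hc ((exists_mul_intCast_eq_intCast_iff n d c).1 ⟨x, hx⟩)

end ZMod

theorem card_mul_sub_eq_one_or_eq_neg_one {R : Type*} [CommRing R] [Finite R] (h2 : (2 : R) ≠ 0)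
    (b d : R) :
    Nat.card {x : R // x * d - b = 1 ∨ x * d - b = -1} =
      Nat.card {x : R // x * d = b + 1} + Nat.card {x : R // x * d = b - 1} := by
  classical
  have hdisj : Disjoint (fun x : R => x * d = b + 1) (fun x => x * d = b - 1) :=
    Pi.disjoint_iff.2 fun _ => Prop.disjoint_iff.2 fun ⟨hp, hm⟩ =>
      h2 (by linear_combination hm - hp)
  rw [← Nat.card_sum, ← Nat.card_congr (subtypeOrEquiv _ _ hdisj)]
  refine Nat.card_congr (Equiv.subtypeEquivRight fun x => ?_)
  rw [sub_eq_iff_eq_add', sub_eq_iff_eq_add', ← sub_eq_add_neg]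

namespace FareyVertex

variable {n : ℕ}

theorem mk_eq_mk_iff_s6 {a c b d : ZMod n} {h : IsCoprime a c} {h' : IsCoprime b d} :
    mk n a c h = mk n b d h' ↔ a = b ∧ c = d ∨ a = -b ∧ c = -d := by
  refine Quotient.eq.trans ?_
  change (a, c) = (b, d) ∨ (a, c) = -(b, d) ↔ _
  simp [Prod.ext_iff]

theorem exists_eq_mk (w : FareyVertex n) : ∃ a c h, w = mk n a c h := by
  obtain ⟨⟨⟨a, c⟩, h⟩, rfl⟩ := Quotient.exists_rep w
  exact ⟨a, c, h, rfl⟩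

theorem det_eq_or_eq_neg_of_mk_eq {a c a' c' b d b' d' : ZMod n} {h₁ : IsCoprime a c}
    {h₁' : IsCoprime a' c'} {h₂ : IsCoprime b d} {h₂' : IsCoprime b' d'}
    (hac : mk n a c h₁ = mk n a' c' h₁') (hbd : mk n b d h₂ = mk n b' d' h₂') :
    a * d - b * c = a' * d' - b' * c' ∨ a * d - b * c = -(a' * d' - b' * c') := by
  rcases mk_eq_mk_iff_s6.1 hac with ⟨rfl, rfl⟩ | ⟨rfl, rfl⟩ <;>
    rcases mk_eq_mk_iff_s6.1 hbd with ⟨rfl, rfl⟩ | ⟨rfl, rfl⟩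
  exacts [.inl rfl, .inr (by ring), .inr (by ring), .inl (by ring)]

theorem adj_mk_mk_iff (h1 : (1 : ZMod n) ≠ 0) {a c b d : ZMod n} {h : IsCoprime a c}
    {h' : IsCoprime b d} :
    (FareyGraph n).Adj (mk n a c h) (mk n b d h') ↔ a * d - b * c = 1 ∨ a * d - b * c = -1 := by
  constructor
  · rintro ⟨-, a', c', b', d', ⟨_, hac⟩, ⟨_, hbd⟩, hdet⟩
    rcases det_eq_or_eq_neg_of_mk_eq hac hbd with hsgn | hsgn <;>
      rcases hdet with hdet | hdet <;> simp [hsgn, hdet]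
  · intro hdet
    refine ⟨fun heq => ?_, a, c, b, d, ⟨h, rfl⟩, ⟨h', rfl⟩, hdet⟩
    have hzero : a * d - b * c = 0 := by
      simpa using det_eq_or_eq_neg_of_mk_eq (rfl : mk n a c h = _) heq.symm
    rcases hdet with hdet | hdet <;> simp [hdet] at hzero <;> exact h1 hzero

theorem adj_mk_one_zero_iff (h1 : (1 : ZMod n) ≠ 0) (w : FareyVertex n) :
    (FareyGraph n).Adj (mk n 1 0 isCoprime_one_left) w ↔
      ∃ x, w = mk n x 1 isCoprime_one_right := by
  obtain ⟨a, c, h, rfl⟩ := exists_eq_mk w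
  simp only [adj_mk_mk_iff h1, mk_eq_mk_iff_s6, one_mul, mul_zero, sub_zero]
  constructor
  · rintro (rfl | rfl)
    exacts [⟨a, .inl ⟨rfl, rfl⟩⟩, ⟨-a, .inr ⟨(neg_neg a).symm, rfl⟩⟩]
  · rintro ⟨x, ⟨-, hc⟩ | ⟨-, hc⟩⟩
    exacts [.inl hc, .inr hc]

theorem card_commonNeighbors_mk_one_zero (h2 : (2 : ZMod n) ≠ 0) {b d : ZMod n}
    (h : IsCoprime b d) :
    Nat.card {w // (FareyGraph n).Adj (mk n 1 0 isCoprime_one_left) w ∧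
        (FareyGraph n).Adj w (mk n b d h)} =
      Nat.card {x : ZMod n // x * d - b = 1 ∨ x * d - b = -1} := by
  have h1 : (1 : ZMod n) ≠ 0 := fun h10 => h2 (by linear_combination 2 * h10)
  symm
  refine Nat.card_congr (.ofBijective (fun x => ⟨mk n x 1 isCoprime_one_right,
      (adj_mk_one_zero_iff h1 _).2 ⟨x, rfl⟩, by simpa [adj_mk_mk_iff h1] using x.2⟩)
    ⟨?_, ?_⟩)
  · rintro ⟨x, _⟩ ⟨y, _⟩ hxy
    rcases mk_eq_mk_iff_s6.1 (congrArg Subtype.val hxy) with ⟨rfl, -⟩ | ⟨-, h11⟩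
    · rfl
    · exact (h2 (by linear_combination h11)).elim
  · rintro ⟨w, hw₀, hw⟩
    obtain ⟨x, rfl⟩ := (adj_mk_one_zero_iff h1 w).1 hw₀
    exact ⟨⟨x, by simpa [adj_mk_mk_iff h1] using hw⟩, rfl⟩

theorem ofInt_one_zero (h : Int.gcd 1 (Int.gcd 0 n) = 1) :
    ofInt n 1 0 h = mk n 1 0 isCoprime_one_left := by
  simp [ofInt]

theorem card_commonNeighbors_ofInt_one_zero [NeZero n] (h2 : (2 : ZMod n) ≠ 0)
    (h₀ : Int.gcd 1 (Int.gcd 0 n) = 1) (b d : ℤ) (h : Int.gcd b (Int.gcd d n) = 1) :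
    Nat.card {w // (FareyGraph n).Adj (ofInt n 1 0 h₀) w ∧
        (FareyGraph n).Adj w (ofInt n b d h)} =
      (if (Int.gcd d n : ℤ) ∣ b + 1 then Int.gcd d n else 0) +
        (if (Int.gcd d n : ℤ) ∣ b - 1 then Int.gcd d n else 0) := by
  rw [ofInt_one_zero, ofInt, card_commonNeighbors_mk_one_zero h2,
    card_mul_sub_eq_one_or_eq_neg_one h2, ← ZMod.card_mul_intCast_eq_intCast,
    ← ZMod.card_mul_intCast_eq_intCast]
  push_cast
  rfl

end FareyVertex

/-- For `n ≥ 3` and integers `b, d` with `gcd(b,d,n) = 1`, setting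
`r = gcd(d,n)`, the number of walks of length 2 in `G3(n)` between `[1:0]` and `[b:d]`
(equivalently, the number of common neighbours of these vertices) is: `2` if `r = 1`;
`4` if `r = 2` and `b` is odd; `0` if `r ≥ 2` and `r` divides neither `b-1` nor `b+1`;
and `r` if `r > 2` and `r` divides one of `b-1`, `b+1`. -/
theorem stmt6 (n : ℕ) (hn : 3 ≤ n) (b d : ℤ) (h : Int.gcd b (Int.gcd d n) = 1) :
    let r : ℕ := Int.gcd d n
    let v₀ : FareyVertex n := FareyVertex.ofInt n 1 0 (by simp)
    let v : FareyVertex n := FareyVertex.ofInt n b d h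
    let W : ℕ := Nat.card {w : FareyVertex n // (FareyGraph n).Adj v₀ w ∧ (FareyGraph n).Adj w v}
    (r = 1 → W = 2) ∧
    (r = 2 → Odd b → W = 4) ∧
    (2 ≤ r → ¬ ((r : ℤ) ∣ b - 1) → ¬ ((r : ℤ) ∣ b + 1) → W = 0) ∧
    (2 < r → ((r : ℤ) ∣ b - 1 ∨ (r : ℤ) ∣ b + 1) → W = r) := by
  intro r v₀ v W
  have : NeZero n := ⟨by omega⟩
  have h2 : (2 : ZMod n) ≠ 0 := by
    rw [← Nat.cast_ofNat, Ne, ZMod.natCast_eq_zero_iff]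
    exact fun hdvd => absurd (Nat.le_of_dvd two_pos hdvd) (by omega)
  have hW : W = (if (r : ℤ) ∣ b + 1 then r else 0) + (if (r : ℤ) ∣ b - 1 then r else 0) :=
    FareyVertex.card_commonNeighbors_ofInt_one_zero h2 _ b d h
  refine ⟨fun hr => ?_, fun hr hb => ?_, fun _ hm hp => ?_, fun hr hdvd => ?_⟩
  · simp [hW, hr]
  · obtain ⟨k, rfl⟩ := hb
    rw [hW, hr, if_pos ⟨k + 1, by push_cast; ring⟩, if_pos ⟨k, by push_cast; ring⟩]
  · simp [hW, hm, hp]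
  · have hnot : ¬ ((r : ℤ) ∣ b - 1 ∧ (r : ℤ) ∣ b + 1) := fun ⟨hm, hp⟩ => by
      have := Int.le_of_dvd two_pos (by simpa using dvd_sub hp hm)
      omega
    rcases hdvd with hm | hp
    · simp [hW, hm, show ¬ (r : ℤ) ∣ b + 1 from fun hp => hnot ⟨hm, hp⟩]
    · simp [hW, hp, show ¬ (r : ℤ) ∣ b - 1 from fun hm => hnot ⟨hm, hp⟩]
end
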